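/- arXiv:2204.01185 — 2 statements merged into one kernel-verified Lean document; each statement's English description precedes it below -/
import Mathlib

section
/- (Pathwise version of Proposition: nonemptiness of the feasible set for the specially perturbed optimal control problem.) Let G = (V,E) be a finite, connected, undirected graph with no self-loops, V = {1,…,N}, N ≥ 2, all edge weights equal to 1, and let w : [0,1] → ℝ be continuous piecewise linear with every slope different from −1. Then for any ρ^a, ρ^b ∈ P(G), the feasible set S_F(ρ^a, ρ^b) — pairs (ρ, m) with ρ : [0,1] → P(G) absolutely continuous, m ∈ L²([0,1]; ℝ^{N×N}) with each m(t) skew-symmetric and supported on E, ρ(0) = ρ^a, ρ(1) = ρ^b, and for a.e. t and every i: ρ̇_i(t) + (1 + ẇ(t)) ∑_{j∈N(i)} m_ij(t) = 0 — is nonempty and contains a pair with finite action A(ρ, m) < ∞. -/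
/-!
Every zero-sum vector on a connected graph is the divergence of a vector field (add up unit flows
along paths), so there are fields `Ma`, `Mb` with row sums `ρa - 1/N` and `ρb - 1/N`. The curve
`ρ t = fadeOut t • ρa + fadeIn t • ρb + (1 - fadeOut t - fadeIn t) • uniform` runs from `ρa` to
`ρb` driven by the flux `bump t • ((2 - t) • Ma - (1 + t) • Mb)`, `bump t = 4t(1 - t)`, and keeps
mass `bump t ^ 2 / 8` on the uniform vector, so `θ_ij(ρ t) ≥ bump t ^ 2 / (8N)`: the Lagrangian
`m² / θ` stays bounded even where `ρa` or `ρb` vanish. Since `ẇ` takes finitely many values, none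
equal to `-1` on `[0, 1)`, dividing the flux by `1 + ẇ` gives a bounded measurable solution of the
perturbed equation.
-/

open scoped BigOperators ENNReal
open MeasureTheory

noncomputable section

/-- Density-dependent edge weight `θ_ij(ρ) = (ρ_i + ρ_j)/2`. -/
def thetaA {N : ℕ} (ρ : Fin N → ℝ) (i j : Fin N) : ℝ := (ρ i + ρ j) / 2

/-- The cost function `L : ℝ × ℝ → [0,∞]`, `L(x,y) = y²/x` for `x > 0`,
`L(0,0) = 0`, and `L(x,y) = ∞` otherwise. -/
def Lcost (x y : ℝ) : ℝ≥0∞ :=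
  if 0 < x then ENNReal.ofReal (y ^ 2 / x)
  else if x = 0 ∧ y = 0 then 0 else ⊤

/-- Membership in the probability simplex `P(G)`. -/
def ProbVec {N : ℕ} (ρ : Fin N → ℝ) : Prop := (∀ i, 0 ≤ ρ i) ∧ ∑ i, ρ i = 1

/-- A vector field on the graph: a skew-symmetric matrix supported on edges. -/
def VecField {N : ℕ} (E : Fin N → Fin N → Prop) (m : Fin N → Fin N → ℝ) : Prop :=
  (∀ i j, m i j = - m j i) ∧ (∀ i j, ¬ E i j → m i j = 0)

/-- `w` is continuous and piecewise linear on `[0,1]` with a.e. derivative `wd`: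
there is a partition `0 = t₀ < t₁ < ⋯ = 1` on whose pieces `w` is affine with
slope `c k`, and `wd` equals `c k` on `[t_k, t_{k+1})`. -/
def IsPWL (w wd : ℝ → ℝ) : Prop :=
  ∃ (K : ℕ) (t : Fin (K + 2) → ℝ) (c : Fin (K + 1) → ℝ),
    StrictMono t ∧ t 0 = 0 ∧ t (Fin.last (K + 1)) = 1 ∧
    (∀ k : Fin (K + 1), ∀ s ∈ Set.Icc (t k.castSucc) (t k.succ),
      w s = w (t k.castSucc) + c k * (s - t k.castSucc)) ∧
    (∀ k : Fin (K + 1), ∀ s ∈ Set.Ico (t k.castSucc) (t k.succ), wd s = c k)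

/-- The action `A(ρ,m) = ∫₀¹ (1/4) ∑_{(i,j)∈E} L(θ_ij(ρ(t)), m_ij(t)) dt`
(sum over ordered pairs), valued in `[0,∞]`. -/
def action {N : ℕ} (E : Fin N → Fin N → Prop) [DecidableRel E]
    (ρ : ℝ → Fin N → ℝ) (m : ℝ → Fin N → Fin N → ℝ) : ℝ≥0∞ :=
  ∫⁻ t in Set.Icc (0 : ℝ) 1,
    (1 / 4) * ∑ i, ∑ j, (if E i j then Lcost (thetaA (ρ t) i j) (m t i j) else 0)

/-- The feasible set `C_F(ρ^a,ρ^b)` of the Wong–Zakai perturbed optimal control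
problem: `ρ` is an absolutely continuous curve in `P(G)` joining `ρ^a` to `ρ^b`,
`m` is an `L²` field of skew-symmetric matrices supported on edges, and for a.e. `t`
and all `i`: `ρ̇_i + ∑_{j∈N(i)} m_ij + ∑_{j∈N(i)} (Σ_j − Σ_i) θ_ij(ρ) ẇ = 0`
(stated in integrated form). -/
def Feasible {N : ℕ} (E : Fin N → Fin N → Prop) [DecidableRel E]
    (Sg : Fin N → ℝ) (wd : ℝ → ℝ) (ρa ρb : Fin N → ℝ)
    (ρ : ℝ → Fin N → ℝ) (m : ℝ → Fin N → Fin N → ℝ) : Prop :=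
  ContinuousOn ρ (Set.Icc 0 1) ∧
  (∀ t ∈ Set.Icc (0 : ℝ) 1, ProbVec (ρ t)) ∧
  ρ 0 = ρa ∧ ρ 1 = ρb ∧
  (∀ t, VecField E (m t)) ∧
  (∀ i j, MemLp (fun t => m t i j) 2 (volume.restrict (Set.Icc (0 : ℝ) 1))) ∧
  (∀ i, IntervalIntegrable
    (fun s => ∑ j, (if E i j then m s i j + (Sg j - Sg i) * thetaA (ρ s) i j * wd s else 0))
    volume 0 1) ∧
  (∀ i, ∀ t ∈ Set.Icc (0 : ℝ) 1,
    ρ t i = ρa i - ∫ s in (0 : ℝ)..t,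
      ∑ j, (if E i j then m s i j + (Sg j - Sg i) * thetaA (ρ s) i j * wd s else 0))

/-- The feasible set `S_F(ρ^a,ρ^b)` of the specially perturbed optimal control
problem: `ρ` is an absolutely continuous curve in `P(G)` joining `ρ^a` to `ρ^b`,
`m` is an `L²` field of skew-symmetric matrices supported on edges, and for a.e. `t`
and all `i`: `ρ̇_i + (1 + ẇ(t)) ∑_{j∈N(i)} m_ij = 0` (stated in integrated form). -/
def SFeasible {N : ℕ} (E : Fin N → Fin N → Prop) [DecidableRel E]
    (wd : ℝ → ℝ) (ρa ρb : Fin N → ℝ)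
    (ρ : ℝ → Fin N → ℝ) (m : ℝ → Fin N → Fin N → ℝ) : Prop :=
  ContinuousOn ρ (Set.Icc 0 1) ∧
  (∀ t ∈ Set.Icc (0 : ℝ) 1, ProbVec (ρ t)) ∧
  ρ 0 = ρa ∧ ρ 1 = ρb ∧
  (∀ t, VecField E (m t)) ∧
  (∀ i j, MemLp (fun t => m t i j) 2 (volume.restrict (Set.Icc (0 : ℝ) 1))) ∧
  (∀ i, IntervalIntegrable
    (fun s => (1 + wd s) * ∑ j, (if E i j then m s i j else 0)) volume 0 1) ∧
  (∀ i, ∀ t ∈ Set.Icc (0 : ℝ) 1,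
    ρ t i = ρa i - ∫ s in (0 : ℝ)..t,
      (1 + wd s) * ∑ j, (if E i j then m s i j else 0))

open Set

section VectorFields

variable {N : ℕ} {E : Fin N → Fin N → Prop}

variable (E) in
def vecFieldSubmodule : Submodule ℝ (Fin N → Fin N → ℝ) where
  carrier := {M | VecField E M}
  zero_mem' := ⟨fun _ _ => by simp, fun _ _ _ => rfl⟩
  add_mem' := fun {M M'} hM hM' =>
    ⟨fun i j => by simp only [Pi.add_apply, hM.1 i j, hM'.1 i j]; ring,
      fun i j h => by simp only [Pi.add_apply, hM.2 i j h, hM'.2 i j h, add_zero]⟩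
  smul_mem' := fun c {M} hM =>
    ⟨fun i j => by simp only [Pi.smul_apply, smul_eq_mul, hM.1 i j, mul_neg],
      fun i j h => by simp only [Pi.smul_apply, smul_eq_mul, hM.2 i j h, mul_zero]⟩

theorem VecField.sum_ite_eq [DecidableRel E] {M : Fin N → Fin N → ℝ} (hM : VecField E M)
    (i : Fin N) : ∑ j, (if E i j then M i j else 0) = ∑ j, M i j :=
  Finset.sum_congr rfl fun j _ => by
    split_ifs with h
    · rfl
    · exact (hM.2 i j h).symm

variable (N) in
def rowSum : (Fin N → Fin N → ℝ) →ₗ[ℝ] Fin N → ℝ where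
  toFun M i := ∑ j, M i j
  map_add' M M' := by ext i; simp [Finset.sum_add_distrib]
  map_smul' c M := by ext i; simp [Finset.mul_sum]

theorem single_sub_single_mem_map_rowSum_of_adj (hE : ∀ i j, E i j ↔ E j i) {i j : Fin N}
    (hij : E i j) :
    Pi.single i 1 - Pi.single j 1 ∈ (vecFieldSubmodule E).map (rowSum N) := by
  refine ⟨fun a b => (if a = i ∧ b = j then 1 else 0) - (if a = j ∧ b = i then 1 else 0),
    ⟨fun a b => ?_, fun a b hab => ?_⟩, ?_⟩
  · simp only [and_comm (a := b = _)]
    ring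
  · dsimp only
    split_ifs <;> simp_all
  · ext a
    simp [rowSum, ite_and, Finset.sum_sub_distrib, Pi.single_apply]

theorem single_sub_single_mem_map_rowSum (hE : ∀ i j, E i j ↔ E j i) {i j : Fin N}
    (h : Relation.ReflTransGen E i j) :
    Pi.single i 1 - Pi.single j 1 ∈ (vecFieldSubmodule E).map (rowSum N) := by
  induction h with
  | refl => simp
  | tail _ hbc ih =>
    simpa using add_mem ih (single_sub_single_mem_map_rowSum_of_adj hE hbc)

theorem mem_map_rowSum_of_sum_eq_zero (hE : ∀ i j, E i j ↔ E j i)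
    (hconn : ∀ i j, Relation.ReflTransGen E i j) {v : Fin N → ℝ} (hv : ∑ i, v i = 0) :
    v ∈ (vecFieldSubmodule E).map (rowSum N) := by
  cases N with
  | zero => exact Subsingleton.elim (0 : Fin 0 → ℝ) v ▸ Submodule.zero_mem _
  | succ n =>
    have hv' : v = ∑ k, v k • (Pi.single k 1 - Pi.single 0 1) := by
      ext i
      simp [smul_sub, Finset.sum_sub_distrib, hv, Finset.sum_apply, Pi.single_apply]
    rw [hv']
    exact sum_mem fun k _ =>
      Submodule.smul_mem _ _ (single_sub_single_mem_map_rowSum hE (hconn k 0))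

end VectorFields

theorem Ico_subset_iUnion_Ico_castSucc_succ {X : Type*} [LinearOrder X] {n : ℕ}
    (t : Fin (n + 1) → X) :
    Ico (t 0) (t (Fin.last n)) ⊆ ⋃ k : Fin n, Ico (t k.castSucc) (t k.succ) := by
  intro s hs
  let a : ℕ → X := fun k => t (Fin.ofNat (n + 1) k)
  have ha : ∀ k (hk : k < n + 1), a k = t ⟨k, hk⟩ := fun k hk => by
    simp only [a]; congr; ext; simp [Nat.mod_eq_of_lt hk]
  obtain ⟨k, hk, hsk⟩ := mem_iUnion₂.1 <|
    Ico_subset_biUnion_Ico n a (by rwa [ha 0 (by omega), ha n (by omega)])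
  rw [Finset.mem_range] at hk
  rw [ha k (by omega), ha (k + 1) (by omega)] at hsk
  exact mem_iUnion.2 ⟨⟨k, hk⟩, hsk⟩

section PiecewiseLinear

variable {w wd : ℝ → ℝ}

theorem IsPWL.finite_image (hw : IsPWL w wd) : (wd '' Ico 0 1).Finite := by
  obtain ⟨K, t, c, -, h0, h1, -, hc⟩ := hw
  refine (finite_range c).subset ?_
  rintro _ ⟨s, hs, rfl⟩
  rw [← h0, ← h1] at hs
  obtain ⟨k, hk⟩ := mem_iUnion.1 (Ico_subset_iUnion_Ico_castSucc_succ t hs)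
  exact ⟨k, (hc k s hk).symm⟩

theorem IsPWL.aemeasurable (hw : IsPWL w wd) : AEMeasurable wd (volume.restrict (Icc 0 1)) := by
  obtain ⟨K, t, c, -, h0, h1, -, hc⟩ := hw
  rw [← Measure.restrict_congr_set Ico_ae_eq_Icc, ← h0, ← h1]
  refine (aemeasurable_iUnion_iff.2 fun k => ?_).mono_set (Ico_subset_iUnion_Ico_castSucc_succ t)
  exact aemeasurable_const.congr
    (ae_restrict_of_forall_mem measurableSet_Ico fun s hs => (hc k s hs).symm)

theorem IsPWL.exists_ae_abs_inv_one_add_le (hw : IsPWL w wd) :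
    ∃ C, ∀ᵐ t ∂volume.restrict (Icc (0 : ℝ) 1), |(1 + wd t)⁻¹| ≤ C := by
  obtain ⟨C, hC⟩ := (hw.finite_image.image fun x => |(1 + x)⁻¹|).bddAbove
  refine ⟨C, ?_⟩
  rw [← Measure.restrict_congr_set Ico_ae_eq_Icc]
  exact ae_restrict_of_forall_mem measurableSet_Ico fun t ht =>
    hC (mem_image_of_mem _ (mem_image_of_mem _ ht))

end PiecewiseLinear

theorem Lcost_le_ofReal {x y K : ℝ} (hx : 0 ≤ x) (h : y ^ 2 ≤ K * x) :
    Lcost x y ≤ ENNReal.ofReal K := by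
  rcases hx.lt_or_eq with hx | rfl
  · rw [Lcost, if_pos hx]
    exact ENNReal.ofReal_le_ofReal ((div_le_iff₀ hx).2 h)
  · obtain rfl : y = 0 :=
      pow_eq_zero_iff two_ne_zero |>.1 (le_antisymm (by simpa using h) (sq_nonneg y))
    simp [Lcost]

section Feasibility

variable {N : ℕ} {E : Fin N → Fin N → Prop} [DecidableRel E]

theorem action_lt_top_of_sq_le {ρ : ℝ → Fin N → ℝ} {m : ℝ → Fin N → Fin N → ℝ} (K : ℝ)
    (h : ∀ᵐ t ∂volume.restrict (Icc (0 : ℝ) 1),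
      ∀ i j, 0 ≤ thetaA (ρ t) i j ∧ m t i j ^ 2 ≤ K * thetaA (ρ t) i j) :
    action E ρ m < ⊤ := by
  calc action E ρ m ≤ ∫⁻ _ in Icc (0 : ℝ) 1, 1 / 4 * ∑ _i : Fin N, ∑ _j : Fin N, ENNReal.ofReal K :=
        lintegral_mono_ae <| h.mono fun t ht => by
          gcongr with i _ j _
          split_ifs
          · exact Lcost_le_ofReal (ht i j).1 (ht i j).2
          · exact zero_le
    _ < ⊤ := by
        rw [lintegral_const]
        exact ENNReal.mul_lt_top (ENNReal.mul_lt_top (by norm_num) (ENNReal.sum_lt_top.2 fun _ _ =>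
          ENNReal.sum_lt_top.2 fun _ _ => ENNReal.ofReal_lt_top)) (measure_lt_top _ _)

variable {w wd : ℝ → ℝ}

theorem sFeasible_of_hasDerivAt (hw : IsPWL w wd) (hwd : ∀ t ∈ Ico (0 : ℝ) 1, wd t ≠ -1)
    {ρ : ℝ → Fin N → ℝ} {F : ℝ → Fin N → Fin N → ℝ}
    (hprob : ∀ t ∈ Icc (0 : ℝ) 1, ProbVec (ρ t)) (hF : ∀ t, F t ∈ vecFieldSubmodule E)
    (hFc : Continuous F) (hρ : ∀ t i, HasDerivAt (fun s => ρ s i) (-∑ j, F t i j) t) :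
    SFeasible E wd (ρ 0) (ρ 1) ρ (fun t => (1 + wd t)⁻¹ • F t) := by
  have hm : ∀ t, (1 + wd t)⁻¹ • F t ∈ vecFieldSubmodule E :=
    fun t => Submodule.smul_mem _ _ (hF t)
  have hdiv : ∀ i, EqOn (fun s => ∑ j, F s i j)
      (fun s => (1 + wd s) * ∑ j, if E i j then ((1 + wd s)⁻¹ • F s) i j else 0) (Ioo 0 1) := by
    intro i s hs
    have : 1 + wd s ≠ 0 := fun h => hwd s (Ioo_subset_Ico_self hs) (by linarith)
    dsimp only
    rw [VecField.sum_ite_eq (hm s)]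
    simp only [Pi.smul_apply, smul_eq_mul, ← Finset.mul_sum]
    field_simp
  have hFi : ∀ i, Continuous fun s => ∑ j, F s i j := by fun_prop
  refine ⟨(continuous_pi fun i => continuous_iff_continuousAt.2 fun t =>
      (hρ t i).continuousAt).continuousOn, hprob, rfl, rfl, hm, fun i j => ?_,
    fun i => ((hFi i).intervalIntegrable 0 1).congr_uIoo (uIoo_of_le (zero_le_one' ℝ) ▸ hdiv i),
    fun i t ht => ?_⟩
  · obtain ⟨C, hC⟩ := hw.exists_ae_abs_inv_one_add_le
    obtain ⟨B, hB⟩ := isCompact_Icc.exists_bound_of_continuousOn (hFc.continuousOn (s := Icc 0 1))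
    have hwm := hw.aemeasurable
    refine MemLp.of_bound (by fun_prop) (C * B) ?_
    filter_upwards [hC, ae_restrict_mem measurableSet_Icc] with t hCt ht
    rw [Pi.smul_apply, Pi.smul_apply, norm_smul, Real.norm_eq_abs]
    exact mul_le_mul hCt
      ((norm_le_pi_norm (F t i) j).trans ((norm_le_pi_norm (F t) i).trans (hB t ht)))
      (norm_nonneg _) ((abs_nonneg _).trans hCt)
  · rw [← intervalIntegral.integral_congr_uIoo
        (uIoo_of_le ht.1 ▸ (hdiv i).mono (Ioo_subset_Ioo_right ht.2)),
      intervalIntegral.integral_eq_sub_of_hasDerivAt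
        (fun s _ => (hρ s i).neg.congr_deriv (neg_neg _))
        ((hFi i).intervalIntegrable _ _), Pi.neg_apply, Pi.neg_apply]
    ring

end Feasibility

def bump (t : ℝ) : ℝ := 4 * t * (1 - t)

def fadeOut (t : ℝ) : ℝ := (1 - t) ^ 2 * (1 + 2 * t - t ^ 2)

def fadeIn (t : ℝ) : ℝ := t ^ 2 * (2 - t ^ 2)

theorem one_sub_fadeOut_sub_fadeIn (t : ℝ) : 1 - fadeOut t - fadeIn t = bump t ^ 2 / 8 := by
  unfold fadeOut fadeIn bump
  ring

theorem hasDerivAt_fadeOut (t : ℝ) : HasDerivAt fadeOut (-(bump t * (2 - t))) t := by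
  have h := (((hasDerivAt_id t).const_sub 1).pow 2).mul
    ((((hasDerivAt_id t).const_mul 2).const_add 1).sub ((hasDerivAt_id t).pow 2))
  exact h.congr_deriv (by simp only [id, bump, Pi.pow_apply, Pi.sub_apply, Nat.cast_ofNat]; ring)

theorem hasDerivAt_fadeIn (t : ℝ) : HasDerivAt fadeIn (bump t * (1 + t)) t := by
  have h := ((hasDerivAt_id t).pow 2).mul (((hasDerivAt_id t).pow 2).const_sub 2)
  exact h.congr_deriv (by simp only [id, bump, Pi.pow_apply, Nat.cast_ofNat]; ring)

theorem fadeOut_nonneg {t : ℝ} (ht : t ∈ Icc (0 : ℝ) 1) : 0 ≤ fadeOut t :=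
  mul_nonneg (sq_nonneg _) (by nlinarith [ht.1, ht.2])

theorem fadeIn_nonneg {t : ℝ} (ht : t ∈ Icc (0 : ℝ) 1) : 0 ≤ fadeIn t :=
  mul_nonneg (sq_nonneg _) (by nlinarith [ht.1, ht.2])

theorem bump_nonneg {t : ℝ} (ht : t ∈ Icc (0 : ℝ) 1) : 0 ≤ bump t :=
  mul_nonneg (mul_nonneg zero_le_four ht.1) (sub_nonneg.2 ht.2)

theorem ProbVec.natCast_ne_zero {N : ℕ} {ρ : Fin N → ℝ} (h : ProbVec ρ) : (N : ℝ) ≠ 0 := by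
  rintro hN
  obtain rfl : N = 0 := by exact_mod_cast hN
  simpa using h.2

theorem ProbVec.sum_sub_uniform {N : ℕ} {ρ : Fin N → ℝ} (h : ProbVec ρ) :
    ∑ i, (ρ i - 1 / N) = 0 := by
  simp [Finset.sum_sub_distrib, h.2, h.natCast_ne_zero]

section Bridge

variable {N : ℕ} {E : Fin N → Fin N → Prop} {ρa ρb : Fin N → ℝ} {Ma Mb : Fin N → Fin N → ℝ}

variable (ρa ρb) in
def bridge (t : ℝ) (i : Fin N) : ℝ :=
  fadeOut t * ρa i + fadeIn t * ρb i + (1 - fadeOut t - fadeIn t) / N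

variable (Ma Mb) in
def bridgeFlux (t : ℝ) : Fin N → Fin N → ℝ :=
  bump t • ((2 - t) • Ma - (1 + t) • Mb)

theorem bridge_zero : bridge ρa ρb 0 = ρa := by
  ext i
  simp [bridge, fadeOut, fadeIn]

theorem bridge_one : bridge ρa ρb 1 = ρb := by
  ext i
  norm_num [bridge, fadeOut, fadeIn]

theorem bump_sq_div_le_bridge (hρa : ProbVec ρa) (hρb : ProbVec ρb) {t : ℝ}
    (ht : t ∈ Icc (0 : ℝ) 1) (i : Fin N) : bump t ^ 2 / 8 / N ≤ bridge ρa ρb t i := by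
  rw [bridge, one_sub_fadeOut_sub_fadeIn]
  have := mul_nonneg (fadeOut_nonneg ht) (hρa.1 i)
  have := mul_nonneg (fadeIn_nonneg ht) (hρb.1 i)
  linarith

theorem probVec_bridge (hρa : ProbVec ρa) (hρb : ProbVec ρb) {t : ℝ}
    (ht : t ∈ Icc (0 : ℝ) 1) : ProbVec (bridge ρa ρb t) := by
  refine ⟨fun i => le_trans (by positivity) (bump_sq_div_le_bridge hρa hρb ht i), ?_⟩
  simp only [bridge, Finset.sum_add_distrib, ← Finset.mul_sum, hρa.2, hρb.2, Finset.sum_const,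
    Finset.card_univ, Fintype.card_fin, nsmul_eq_mul]
  field_simp [hρa.natCast_ne_zero]
  ring

variable (ρa ρb) in
theorem hasDerivAt_bridge (t : ℝ) (i : Fin N) :
    HasDerivAt (fun s => bridge ρa ρb s i)
      (-(bump t * ((2 - t) * (ρa i - 1 / N) - (1 + t) * (ρb i - 1 / N)))) t := by
  have h := (((hasDerivAt_fadeOut t).mul_const (ρa i)).add
    ((hasDerivAt_fadeIn t).mul_const (ρb i))).add
    ((((hasDerivAt_fadeOut t).const_sub 1).sub (hasDerivAt_fadeIn t)).div_const N)
  exact h.congr_deriv (by ring)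

theorem hasDerivAt_bridge_of_rowSum (hMa : rowSum N Ma = fun i => ρa i - 1 / N)
    (hMb : rowSum N Mb = fun i => ρb i - 1 / N) (t : ℝ) (i : Fin N) :
    HasDerivAt (fun s => bridge ρa ρb s i) (-∑ j, bridgeFlux Ma Mb t i j) t := by
  have hsum : ∀ M : Fin N → Fin N → ℝ, ∑ j, M i j = rowSum N M i := fun _ => rfl
  convert hasDerivAt_bridge ρa ρb t i using 2
  simp only [bridgeFlux, Pi.smul_apply, Pi.sub_apply, smul_eq_mul, ← Finset.mul_sum,
    Finset.sum_sub_distrib, hsum, hMa, hMb]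

theorem bridgeFlux_mem (hMa : Ma ∈ vecFieldSubmodule E) (hMb : Mb ∈ vecFieldSubmodule E)
    (t : ℝ) : bridgeFlux Ma Mb t ∈ vecFieldSubmodule E :=
  Submodule.smul_mem _ _ (sub_mem (Submodule.smul_mem _ _ hMa) (Submodule.smul_mem _ _ hMb))

theorem continuous_bridgeFlux : Continuous (bridgeFlux Ma Mb) := by
  unfold bridgeFlux bump
  fun_prop

theorem abs_bridgeFlux_le {t : ℝ} (ht : t ∈ Icc (0 : ℝ) 1) (i j : Fin N) :
    |bridgeFlux Ma Mb t i j| ≤ 2 * bump t * (‖Ma‖ + ‖Mb‖) :=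
  calc |bridgeFlux Ma Mb t i j| ≤ ‖bridgeFlux Ma Mb t‖ := by
        simpa only [Real.norm_eq_abs] using
          (norm_le_pi_norm (bridgeFlux Ma Mb t i) j).trans (norm_le_pi_norm _ i)
    _ ≤ bump t * ((2 - t) * ‖Ma‖ + (1 + t) * ‖Mb‖) := by
        rw [bridgeFlux, norm_smul, Real.norm_of_nonneg (bump_nonneg ht)]
        refine mul_le_mul_of_nonneg_left ?_ (bump_nonneg ht)
        refine (norm_sub_le ((2 - t) • Ma) ((1 + t) • Mb)).trans_eq ?_
        rw [norm_smul, norm_smul, Real.norm_of_nonneg (by linarith [ht.2]),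
          Real.norm_of_nonneg (by linarith [ht.1])]
    _ ≤ 2 * bump t * (‖Ma‖ + ‖Mb‖) := by
        have := bump_nonneg ht
        nlinarith [norm_nonneg Ma, norm_nonneg Mb, ht.1, ht.2,
          mul_nonneg this (norm_nonneg Ma), mul_nonneg this (norm_nonneg Mb)]

theorem action_bridge_lt_top [DecidableRel E] {w wd : ℝ → ℝ} (hw : IsPWL w wd)
    (hρa : ProbVec ρa) (hρb : ProbVec ρb) :
    action E (bridge ρa ρb) (fun t => (1 + wd t)⁻¹ • bridgeFlux Ma Mb t) < ⊤ := by
  obtain ⟨C, hC⟩ := hw.exists_ae_abs_inv_one_add_le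
  have hN : (0 : ℝ) < N := (Nat.cast_nonneg N).lt_of_ne' hρa.natCast_ne_zero
  refine action_lt_top_of_sq_le (32 * N * (C * (‖Ma‖ + ‖Mb‖)) ^ 2) ?_
  filter_upwards [hC, ae_restrict_mem measurableSet_Icc] with t hCt ht i j
  have hθ : bump t ^ 2 / 8 / N ≤ thetaA (bridge ρa ρb t) i j := by
    rw [thetaA]
    linarith [bump_sq_div_le_bridge hρa hρb ht i, bump_sq_div_le_bridge hρa hρb ht j]
  refine ⟨le_trans (by positivity) hθ, ?_⟩
  calc ((1 + wd t)⁻¹ • bridgeFlux Ma Mb t) i j ^ 2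
      = |(1 + wd t)⁻¹| ^ 2 * |bridgeFlux Ma Mb t i j| ^ 2 := by
        simp only [Pi.smul_apply, smul_eq_mul, mul_pow, sq_abs]
    _ ≤ C ^ 2 * (2 * bump t * (‖Ma‖ + ‖Mb‖)) ^ 2 := by
        gcongr
        exact abs_bridgeFlux_le ht i j
    _ = 32 * N * (C * (‖Ma‖ + ‖Mb‖)) ^ 2 * (bump t ^ 2 / 8 / N) := by
        field_simp
        ring
    _ ≤ 32 * N * (C * (‖Ma‖ + ‖Mb‖)) ^ 2 * thetaA (bridge ρa ρb t) i j := by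
        gcongr

end Bridge

theorem special_feasible_set_nonempty_with_finite_action_general
    (N : ℕ) (E : Fin N → Fin N → Prop) [DecidableRel E]
    (hEsymm : ∀ i j, E i j ↔ E j i)
    (hconn : ∀ i j : Fin N, Relation.ReflTransGen (fun a b => E a b) i j)
    (w wd : ℝ → ℝ) (hw : IsPWL w wd)
    (hslope : ∀ t ∈ Set.Ico (0 : ℝ) 1, wd t ≠ -1)
    (ρa ρb : Fin N → ℝ) (hρa : ProbVec ρa) (hρb : ProbVec ρb) :
    ∃ (ρ : ℝ → Fin N → ℝ) (m : ℝ → Fin N → Fin N → ℝ),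
      SFeasible E wd ρa ρb ρ m ∧ action E ρ m < ⊤ := by
  obtain ⟨Ma, hMa, hdivMa⟩ := mem_map_rowSum_of_sum_eq_zero hEsymm hconn hρa.sum_sub_uniform
  obtain ⟨Mb, hMb, hdivMb⟩ := mem_map_rowSum_of_sum_eq_zero hEsymm hconn hρb.sum_sub_uniform
  refine ⟨bridge ρa ρb, fun t => (1 + wd t)⁻¹ • bridgeFlux Ma Mb t, ?_,
    action_bridge_lt_top hw hρa hρb⟩
  have h := sFeasible_of_hasDerivAt hw hslope (fun t ht => probVec_bridge hρa hρb ht)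
    (bridgeFlux_mem hMa hMb) continuous_bridgeFlux (hasDerivAt_bridge_of_rowSum hdivMa hdivMb)
  rwa [bridge_zero, bridge_one] at h

/-- Nonemptiness of the feasible set for the specially perturbed optimal control
problem when no slope of `w` equals `−1`: for any endpoints in `P(G)` there is a
feasible pair with finite action. -/
theorem special_feasible_set_nonempty_with_finite_action
    (N : ℕ) (hN : 2 ≤ N) (E : Fin N → Fin N → Prop) [DecidableRel E]
    (hEsymm : ∀ i j, E i j ↔ E j i) (hEirr : ∀ i, ¬ E i i)
    (hconn : ∀ i j : Fin N, Relation.ReflTransGen (fun a b => E a b) i j)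
    (w wd : ℝ → ℝ) (hw : IsPWL w wd)
    (hslope : ∀ t ∈ Set.Ico (0 : ℝ) 1, wd t ≠ -1)
    (ρa ρb : Fin N → ℝ) (hρa : ProbVec ρa) (hρb : ProbVec ρb) :
    ∃ (ρ : ℝ → Fin N → ℝ) (m : ℝ → Fin N → Fin N → ℝ),
      SFeasible E wd ρa ρb ρ m ∧ action E ρ m < ⊤ :=
  special_feasible_set_nonempty_with_finite_action_general N E hEsymm hconn w wd hw hslope ρa ρb hρa
    hρb

end
end

section
/- (Boundary behavior on the three-node path graph for the specially perturbed problem.) Let V = {1,2,3}, E = {(1,2),(2,3)} (undirected, weights 1), θ_ij(ρ) = (ρ_i + ρ_j)/2, ρ^a = (0,0,1), ρ^b = (0,1/2,1/2), and let w : [0,1] → ℝ be continuous piecewise linear with every slope different from −1. If (ρ, m) ∈ S_F(ρ^a, ρ^b) has finite action A(ρ, m) < ∞ and ρ₁ is not almost everywhere zero, then there exists (ρ̃, m̃) ∈ S_F(ρ^a, ρ^b) with A(ρ̃, m̃) < A(ρ, m). Consequently, every minimizer (ρ*, m*) of A over S_F(ρ^a, ρ^b) satisfies ρ*₁(t) =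 0 for all t ∈ [0,1], i.e. the optimal path lies on the boundary of P(G). -/
open scoped BigOperators ENNReal
open MeasureTheory

noncomputable section

/-- The edge relation of the three-node path graph `1 — 2 — 3`
(vertices indexed `0, 1, 2`). -/
def pathE3 : Fin 3 → Fin 3 → Prop := fun i j =>
  (i.val = 0 ∧ j.val = 1) ∨ (i.val = 1 ∧ j.val = 0) ∨
  (i.val = 1 ∧ j.val = 2) ∨ (i.val = 2 ∧ j.val = 1)

instance : DecidableRel pathE3 := fun i j => by unfold pathE3; infer_instance

/-!
Merge the mass of the leaf `1` into its neighbour `2` and drop the flux on the edge `1 — 2`.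
The new pair is still feasible, since the flux on `1 — 2` cancels in the continuity equation
for `ρ₁ + ρ₂`. In the action the edge `1 — 2` now costs nothing while `θ₂₃` can only grow, so
the action drops by the old cost of `1 — 2`. That cost vanishes only if `m₁₂ = 0` a.e., which
forces `ρ₁ ≡ 0`.

A minimizer has finite action, because the straight line from `ρ^a` to `ρ^b`, carried by the
flux `-1 / (2 (1 + ẇ))` on `2 — 3`, is feasible, and that flux is a bounded step function.
A minimizer with `ρ₁(t) > 0` at some `t` would, by continuity, have `ρ₁` not a.e. zero and
could be improved.
-/

open Set

lemma Lcost_zero_right {x : ℝ} (hx : 0 ≤ x) : Lcost x 0 = 0 := by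
  rcases hx.lt_or_eq with hx | rfl <;> simp [Lcost, *]

lemma Lcost_eq_zero_iff {x y : ℝ} (hx : 0 ≤ x) : Lcost x y = 0 ↔ y = 0 := by
  refine ⟨fun h => ?_, fun h => h ▸ Lcost_zero_right hx⟩
  unfold Lcost at h
  split_ifs at h with hpos hzero
  · have : y ^ 2 / x ≤ 0 := ENNReal.ofReal_eq_zero.1 h
    have : y ^ 2 ≤ 0 := by rwa [div_le_iff₀ hpos, zero_mul] at this
    nlinarith [sq_nonneg y]
  · exact hzero.2
  · exact absurd h ENNReal.top_ne_zero

lemma Lcost_le_Lcost_of_le_left {x x' : ℝ} (y : ℝ) (hx : 0 ≤ x) (h : x ≤ x') :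
    Lcost x' y ≤ Lcost x y := by
  rcases hx.lt_or_eq with hx | rfl
  · simp only [Lcost, hx, hx.trans_le h, if_true]
    gcongr
  · by_cases hy : y = 0
    · simp [hy, Lcost_zero_right h, Lcost_zero_right le_rfl]
    · simp [Lcost, hy]

lemma measurable_Lcost : Measurable fun p : ℝ × ℝ => Lcost p.1 p.2 := by
  unfold Lcost
  refine Measurable.ite (measurableSet_lt measurable_const measurable_fst)
    (ENNReal.measurable_ofReal.comp ((measurable_snd.pow_const 2).div measurable_fst))
    (Measurable.ite ?_ measurable_const measurable_const)
  exact (measurable_fst (measurableSet_singleton 0)).inter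
    (measurable_snd (measurableSet_singleton 0))

lemma AEMeasurable.Lcost {α : Type*} [MeasurableSpace α] {μ : Measure α} {x y : α → ℝ}
    (hx : AEMeasurable x μ) (hy : AEMeasurable y μ) :
    AEMeasurable (fun a => _root_.Lcost (x a) (y a)) μ :=
  measurable_Lcost.comp_aemeasurable (hx.prodMk hy)

section PathGraph

variable {M : Type*} [AddCommMonoid M] (x : Fin 3 → M)

lemma sum_pathE3_zero : ∑ j, (if pathE3 0 j then x j else 0) = x 1 := by
  simp [Fin.sum_univ_three, pathE3]

lemma sum_pathE3_one : ∑ j, (if pathE3 1 j then x j else 0) = x 0 + x 2 := by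
  simp [Fin.sum_univ_three, pathE3]

lemma sum_pathE3_two : ∑ j, (if pathE3 2 j then x j else 0) = x 1 := by
  simp [Fin.sum_univ_three, pathE3]

lemma sum_sum_pathE3 (F : Fin 3 → Fin 3 → M) :
    ∑ i, ∑ j, (if pathE3 i j then F i j else 0) = F 0 1 + F 1 0 + (F 1 2 + F 2 1) := by
  rw [Fin.sum_univ_three, sum_pathE3_zero, sum_pathE3_one, sum_pathE3_two]
  abel

end PathGraph

def edgeCost {N : ℕ} (E : Fin N → Fin N → Prop) [DecidableRel E] (x : Fin N → ℝ)
    (y : Fin N → Fin N → ℝ) : ℝ≥0∞ :=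
  ∑ i, ∑ j, (if E i j then Lcost (thetaA x i j) (y i j) else 0)

lemma action_eq_setLIntegral_edgeCost {N : ℕ} (E : Fin N → Fin N → Prop) [DecidableRel E]
    (ρ : ℝ → Fin N → ℝ) (m : ℝ → Fin N → Fin N → ℝ) :
    action E ρ m = ∫⁻ t in Icc (0 : ℝ) 1, 1 / 4 * edgeCost E (ρ t) (m t) :=
  rfl

lemma edgeCost_pathE3 (x : Fin 3 → ℝ) (y : Fin 3 → Fin 3 → ℝ) :
    edgeCost pathE3 x y = Lcost (thetaA x 0 1) (y 0 1) + Lcost (thetaA x 1 0) (y 1 0) +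
      (Lcost (thetaA x 1 2) (y 1 2) + Lcost (thetaA x 2 1) (y 2 1)) :=
  sum_sum_pathE3 _

lemma thetaA_comm {N : ℕ} (i j : Fin N) (x : Fin N → ℝ) : thetaA x i j = thetaA x j i := by
  simp only [thetaA, add_comm]

lemma Fin.exists_mem_Ico_castSucc_succ {α : Type*} [LinearOrder α] :
    ∀ {n : ℕ} (T : Fin (n + 2) → α) {s : α}, s ∈ Ico (T 0) (T (Fin.last _)) →
      ∃ k : Fin (n + 1), s ∈ Ico (T k.castSucc) (T k.succ)
  | 0, _, _, hs => ⟨0, hs⟩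
  | n + 1, T, s, hs => by
    by_cases hlt : s < T (Fin.last (n + 1)).castSucc
    · obtain ⟨k, hk⟩ := exists_mem_Ico_castSucc_succ (T ∘ Fin.castSucc) ⟨hs.1, hlt⟩
      exact ⟨k.castSucc, hk⟩
    · exact ⟨Fin.last _, not_lt.1 hlt, hs.2⟩

lemma IsPWL.memLp_top_comp {w wd : ℝ → ℝ} (hw : IsPWL w wd) (f : ℝ → ℝ) :
    MemLp (fun s => f (wd s)) ⊤ (volume.restrict (Icc 0 1)) := by
  obtain ⟨K, T, c, -, hT0, hT1, -, hwd⟩ := hw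
  have hcover : Ico (0 : ℝ) 1 ⊆ ⋃ k : Fin (K + 1), Ico (T k.castSucc) (T k.succ) := fun s hs =>
    mem_iUnion.2 (Fin.exists_mem_Ico_castSucc_succ T (by rwa [hT0, hT1]))
  rw [← Measure.restrict_congr_set Ico_ae_eq_Icc]
  refine memLp_top_of_bound ?_ (∑ k, |f (c k)|) ?_
  · refine (aestronglyMeasurable_iUnion_iff.2 fun k => ?_).mono_measure
      (Measure.restrict_mono hcover le_rfl)
    refine (aestronglyMeasurable_const (b := f (c k))).congr
      (ae_restrict_of_forall_mem measurableSet_Ico fun s hs => ?_)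
    simp only [hwd k s hs]
  · refine ae_restrict_of_forall_mem measurableSet_Ico fun s hs => ?_
    obtain ⟨k, hk⟩ := mem_iUnion.1 (hcover hs)
    rw [hwd k s hk, Real.norm_eq_abs]
    exact Finset.single_le_sum (fun k _ => abs_nonneg (f (c k))) (Finset.mem_univ k)

lemma ProbVec.lineMap {N : ℕ} {ρa ρb : Fin N → ℝ} (ha : ProbVec ρa) (hb : ProbVec ρb) {t : ℝ}
    (ht : t ∈ Icc (0 : ℝ) 1) : ProbVec (ρa + t • (ρb - ρa)) := by
  refine ⟨fun i => ?_, ?_⟩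
  · have h : (ρa + t • (ρb - ρa)) i = (1 - t) * ρa i + t * ρb i := by simp; ring
    rw [h]
    exact add_nonneg (mul_nonneg (by linarith [ht.2]) (ha.1 i)) (mul_nonneg ht.1 (hb.1 i))
  · simp [Finset.sum_add_distrib, ← Finset.mul_sum, Finset.sum_sub_distrib, ha.2, hb.2]

lemma sFeasible_lineMap {N : ℕ} {E : Fin N → Fin N → Prop} [DecidableRel E] {wd : ℝ → ℝ}
    {ρa ρb : Fin N → ℝ} {m : ℝ → Fin N → Fin N → ℝ} (ha : ProbVec ρa) (hb : ProbVec ρb)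
    (hm : ∀ t, VecField E (m t))
    (hL2 : ∀ i j, MemLp (fun t => m t i j) 2 (volume.restrict (Icc (0 : ℝ) 1)))
    (hflux : ∀ i, ∀ s ∈ Ico (0 : ℝ) 1,
      (1 + wd s) * ∑ j, (if E i j then m s i j else 0) = ρa i - ρb i) :
    SFeasible E wd ρa ρb (fun t => ρa + t • (ρb - ρa)) m := by
  have hflux' : ∀ i, ∀ t ∈ Icc (0 : ℝ) 1, EqOn (fun _ => ρa i - ρb i)
      (fun s => (1 + wd s) * ∑ j, (if E i j then m s i j else 0)) (uIoo 0 t) := by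
    intro i t ht s hs
    rw [uIoo_of_le ht.1] at hs
    exact (hflux i s ⟨hs.1.le, hs.2.trans_le ht.2⟩).symm
  refine ⟨by fun_prop, fun t ht => ha.lineMap hb ht, by simp, by simp, hm, hL2,
    fun i => intervalIntegrable_const.congr_uIoo (hflux' i 1 ⟨zero_le_one, le_rfl⟩),
    fun i t ht => ?_⟩
  rw [← intervalIntegral.integral_congr_uIoo (hflux' i t ht)]
  simp
  ring

lemma probVec_start : ProbVec (![0, 0, 1] : Fin 3 → ℝ) :=
  ⟨fun i => by fin_cases i <;> norm_num, by simp [Fin.sum_univ_three]⟩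

lemma probVec_end : ProbVec (![0, 1/2, 1/2] : Fin 3 → ℝ) :=
  ⟨fun i => by fin_cases i <;> norm_num, by norm_num [Fin.sum_univ_three, Matrix.cons_val_two]⟩

lemma exists_sFeasible_action_lt_top {w wd : ℝ → ℝ} (hw : IsPWL w wd)
    (hslope : ∀ t ∈ Ico (0 : ℝ) 1, wd t ≠ -1) :
    ∃ (ρ : ℝ → Fin 3 → ℝ) (m : ℝ → Fin 3 → Fin 3 → ℝ),
      SFeasible pathE3 wd ![0, 0, 1] ![0, 1/2, 1/2] ρ m ∧ action pathE3 ρ m < ⊤ := by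
  -- `(1 + wd) * g = -1/2`: half of the mass flows from `3` to `2` at constant speed
  set g : ℝ → ℝ := fun s => -1 / (2 * (1 + wd s))
  have hg : MemLp g 2 (volume.restrict (Icc 0 1)) :=
    (hw.memLp_top_comp fun x => -1 / (2 * (1 + x))).mono_exponent le_top
  set m : ℝ → Fin 3 → Fin 3 → ℝ := fun s => ![![0, 0, 0], ![0, 0, g s], ![0, -g s, 0]]
  have hfeas : SFeasible pathE3 wd ![0, 0, 1] ![0, 1/2, 1/2]
      (fun t => ![0, 0, 1] + t • (![0, 1/2, 1/2] - ![0, 0, 1])) m := by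
    refine sFeasible_lineMap probVec_start probVec_end (fun t => ⟨?_, ?_⟩) (fun i j => ?_)
      (fun i s hs => ?_)
    · intro i j; fin_cases i <;> fin_cases j <;> simp [m]
    · intro i j hE; fin_cases i <;> fin_cases j <;> simp_all [m, pathE3]
    · have hg' : MemLp (fun t => -g t) 2 (volume.restrict (Icc 0 1)) := hg.neg
      fin_cases i <;> fin_cases j <;> simp [m, hg, hg']
    · have h1 : 1 + wd s ≠ 0 := fun h => hslope s hs (by linarith)
      fin_cases i
      · simp [m, sum_pathE3_zero]
      · simp [m, g, sum_pathE3_one]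
        field_simp
      · simp [m, g, sum_pathE3_two]
        field_simp
        norm_num
  refine ⟨_, m, hfeas, ?_⟩
  have hcost : ∀ t ∈ Icc (0 : ℝ) 1, 1 / 4 * edgeCost pathE3
      (![0, 0, 1] + t • (![0, 1/2, 1/2] - ![0, 0, 1])) (m t) ≤ ENNReal.ofReal (4 * g t ^ 2) := by
    intro t ht
    have hθ01 : thetaA (![0, 0, 1] + t • (![0, 1/2, 1/2] - ![0, 0, 1])) 0 1 = t / 4 := by
      simp [thetaA]; ring
    have hθ12 : thetaA (![0, 0, 1] + t • (![0, 1/2, 1/2] - ![0, 0, 1])) 1 2 = 1 / 2 := by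
      simp [thetaA]; ring
    have hθ0 : (0 : ℝ) ≤ t / 4 := by linarith [ht.1]
    refine (mul_le_of_le_one_left' (by norm_num)).trans_eq ?_
    rw [edgeCost_pathE3, thetaA_comm 1 0, thetaA_comm 2 1, hθ01, hθ12]
    change Lcost (t / 4) 0 + Lcost (t / 4) 0 + (Lcost (1 / 2) (g t) + Lcost (1 / 2) (-g t)) = _
    rw [Lcost_zero_right hθ0, add_zero, zero_add, Lcost, Lcost, if_pos one_half_pos,
      if_pos one_half_pos, ← ENNReal.ofReal_add (by positivity) (by positivity)]
    ring_nf
  rw [action_eq_setLIntegral_edgeCost]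
  exact (setLIntegral_mono' measurableSet_Icc hcost).trans_lt
    (hg.integrable_sq.const_mul 4).lintegral_lt_top

def mergeLeaf (x : Fin 3 → ℝ) : Fin 3 → ℝ := ![0, x 0 + x 1, x 2]

def cutVertex {N : ℕ} (v : Fin N) (y : Fin N → Fin N → ℝ) : Fin N → Fin N → ℝ :=
  fun i j => if i = v ∨ j = v then 0 else y i j

lemma probVec_mergeLeaf {x : Fin 3 → ℝ} (hx : ProbVec x) : ProbVec (mergeLeaf x) := by
  obtain ⟨hnn, hsum⟩ := hx
  refine ⟨fun i => ?_, ?_⟩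
  · fin_cases i <;> simp [mergeLeaf, add_nonneg, hnn]
  · rw [Fin.sum_univ_three] at hsum ⊢
    simp [mergeLeaf, ← hsum, add_assoc]

lemma vecField_cutVertex {N : ℕ} {E : Fin N → Fin N → Prop} {y : Fin N → Fin N → ℝ}
    (hy : VecField E y) (v : Fin N) : VecField E (cutVertex v y) := by
  refine ⟨fun i j => ?_, fun i j hE => ?_⟩
  · simp only [cutVertex, or_comm (a := i = v)]
    split_ifs <;> simp [hy.1 i j]
  · simp [cutVertex, hy.2 i j hE]

lemma memLp_cutVertex {N : ℕ} {μ : Measure ℝ} {m : ℝ → Fin N → Fin N → ℝ}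
    (hm : ∀ i j, MemLp (fun t => m t i j) 2 μ) (v : Fin N) (i j : Fin N) :
    MemLp (fun t => cutVertex v (m t) i j) 2 μ := by
  unfold cutVertex
  split_ifs
  · exact MemLp.zero
  · exact hm i j

lemma sum_pathE3_cutVertex_zero_eq_mergeLeaf {y : Fin 3 → Fin 3 → ℝ} (hy : VecField pathE3 y)
    (i : Fin 3) :
    ∑ j, (if pathE3 i j then cutVertex 0 y i j else 0) =
      mergeLeaf (fun i => ∑ j, if pathE3 i j then y i j else 0) i := by
  fin_cases i <;>
    simp [cutVertex, mergeLeaf, sum_pathE3_zero, sum_pathE3_one, sum_pathE3_two, hy.1 0 1]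

lemma sFeasible_mergeLeaf {wd : ℝ → ℝ} {ρa ρb : Fin 3 → ℝ} {ρ : ℝ → Fin 3 → ℝ}
    {m : ℝ → Fin 3 → Fin 3 → ℝ} (h : SFeasible pathE3 wd ρa ρb ρ m) :
    SFeasible pathE3 wd (mergeLeaf ρa) (mergeLeaf ρb) (fun t => mergeLeaf (ρ t))
      (fun t => cutVertex 0 (m t)) := by
  obtain ⟨hc, hP, h0, h1, hV, hL2, hInt, hODE⟩ := h
  have hflux : ∀ i s, (1 + wd s) * ∑ j, (if pathE3 i j then cutVertex 0 (m s) i j else 0) =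
      mergeLeaf (fun i => (1 + wd s) * ∑ j, if pathE3 i j then m s i j else 0) i := by
    intro i s
    rw [sum_pathE3_cutVertex_zero_eq_mergeLeaf (hV s)]
    fin_cases i <;> simp [mergeLeaf, mul_add]
  refine ⟨?_, fun t ht => probVec_mergeLeaf (hP t ht), congrArg mergeLeaf h0,
    congrArg mergeLeaf h1, fun t => vecField_cutVertex (hV t) 0, memLp_cutVertex hL2 0,
    fun i => ?_, fun i t ht => ?_⟩
  · refine continuousOn_pi.2 fun i => ?_
    have hci : ∀ i, ContinuousOn (fun t => ρ t i) (Icc 0 1) := continuousOn_pi.1 hc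
    fin_cases i
    · exact continuousOn_const
    · exact (hci 0).add (hci 1)
    · exact hci 2
  · simp only [hflux]
    fin_cases i
    · exact intervalIntegrable_const
    · exact (hInt 0).add (hInt 1)
    · exact hInt 2
  · simp only [hflux]
    fin_cases i
    · simp [mergeLeaf]
    · have hsub : uIcc (0 : ℝ) t ⊆ uIcc 0 1 :=
        uIcc_subset_uIcc_left (by simpa [uIcc_of_le zero_le_one] using ht)
      simp [mergeLeaf, hODE 0 t ht, hODE 1 t ht,
        intervalIntegral.integral_add ((hInt 0).mono_set hsub) ((hInt 1).mono_set hsub)]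
      ring
    · simp [mergeLeaf, hODE 2 t ht]

lemma edgeCost_mergeLeaf_add_le {x : Fin 3 → ℝ} (hx : ∀ i, 0 ≤ x i) (y : Fin 3 → Fin 3 → ℝ) :
    edgeCost pathE3 (mergeLeaf x) (cutVertex 0 y) +
        (Lcost (thetaA x 0 1) (y 0 1) + Lcost (thetaA x 1 0) (y 1 0)) ≤
      edgeCost pathE3 x y := by
  have hleaf : Lcost (thetaA (mergeLeaf x) 0 1) 0 = 0 :=
    Lcost_zero_right (by simp [thetaA, mergeLeaf]; linarith [hx 0, hx 1])
  have hθ : thetaA x 1 2 ≤ thetaA (mergeLeaf x) 1 2 := by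
    simp [thetaA, mergeLeaf]; linarith [hx 0]
  have h12 : Lcost (thetaA (mergeLeaf x) 1 2) (y 1 2) ≤ Lcost (thetaA x 1 2) (y 1 2) :=
    Lcost_le_Lcost_of_le_left _ (by simp [thetaA]; linarith [hx 1, hx 2]) hθ
  have h21 : Lcost (thetaA (mergeLeaf x) 2 1) (y 2 1) ≤ Lcost (thetaA x 2 1) (y 2 1) := by
    rw [thetaA_comm 2 1, thetaA_comm 2 1]
    exact Lcost_le_Lcost_of_le_left _ (by simp [thetaA]; linarith [hx 1, hx 2]) hθ
  rw [edgeCost_pathE3, edgeCost_pathE3]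
  change Lcost (thetaA (mergeLeaf x) 0 1) 0 + Lcost (thetaA (mergeLeaf x) 1 0) 0 +
    (Lcost (thetaA (mergeLeaf x) 1 2) (y 1 2) + Lcost (thetaA (mergeLeaf x) 2 1) (y 2 1)) + _ ≤ _
  rw [thetaA_comm 1 0 (mergeLeaf x), hleaf, zero_add, zero_add, add_comm]
  gcongr

lemma sFeasible_leaf_eq_of_ae_eq_zero {wd : ℝ → ℝ} {ρa ρb : Fin 3 → ℝ} {ρ : ℝ → Fin 3 → ℝ}
    {m : ℝ → Fin 3 → Fin 3 → ℝ} (h : SFeasible pathE3 wd ρa ρb ρ m)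
    (hm : ∀ᵐ s ∂(volume.restrict (Icc (0 : ℝ) 1)), m s 0 1 = 0) :
    ∀ t ∈ Icc (0 : ℝ) 1, ρ t 0 = ρa 0 := by
  obtain ⟨-, -, -, -, -, -, -, hODE⟩ := h
  intro t ht
  rw [hODE 0 t ht, sub_eq_self]
  simp only [sum_pathE3_zero]
  refine (intervalIntegral.integral_congr_ae ?_).trans intervalIntegral.integral_zero
  filter_upwards [(ae_restrict_iff' measurableSet_Icc).1 hm] with s hs hsI
  rw [uIoc_of_le ht.1] at hsI
  simp [hs ⟨hsI.1.le, hsI.2.trans ht.2⟩]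

lemma action_mergeLeaf_lt {wd : ℝ → ℝ} {ρa ρb : Fin 3 → ℝ} {ρ : ℝ → Fin 3 → ℝ}
    {m : ℝ → Fin 3 → Fin 3 → ℝ} (h : SFeasible pathE3 wd ρa ρb ρ m) (ha : ρa 0 = 0)
    (hfin : action pathE3 ρ m < ⊤)
    (hne : ¬ ∀ᵐ t ∂(volume.restrict (Icc (0 : ℝ) 1)), ρ t 0 = 0) :
    action pathE3 (fun t => mergeLeaf (ρ t)) (fun t => cutVertex 0 (m t)) < action pathE3 ρ m := by
  obtain ⟨hc, hP, -, -, -, hL2, -, -⟩ := id h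
  set H : ℝ → ℝ≥0∞ := fun t =>
    1 / 4 * (Lcost (thetaA (ρ t) 0 1) (m t 0 1) + Lcost (thetaA (ρ t) 1 0) (m t 1 0))
  have hle : action pathE3 (fun t => mergeLeaf (ρ t)) (fun t => cutVertex 0 (m t)) +
      ∫⁻ t in Icc 0 1, H t ≤ action pathE3 ρ m := by
    rw [action_eq_setLIntegral_edgeCost, action_eq_setLIntegral_edgeCost]
    refine (le_lintegral_add _ _).trans (setLIntegral_mono' measurableSet_Icc fun t ht => ?_)
    rw [← mul_add]
    gcongr
    exact edgeCost_mergeLeaf_add_le (hP t ht).1 _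
  have hH : ∫⁻ t in Icc 0 1, H t ≠ 0 := by
    intro hzero
    have hρ : ∀ i, AEMeasurable (fun t => ρ t i) (volume.restrict (Icc 0 1)) := fun i =>
      ((continuousOn_pi.1 hc) i).aemeasurable measurableSet_Icc
    have hm : ∀ i j, AEMeasurable (fun t => m t i j) (volume.restrict (Icc 0 1)) := fun i j =>
      (hL2 i j).aestronglyMeasurable.aemeasurable
    have hHmeas : AEMeasurable H (volume.restrict (Icc 0 1)) :=
      ((((hρ 0).add (hρ 1)).div_const 2).Lcost (hm 0 1)).add
        ((((hρ 1).add (hρ 0)).div_const 2).Lcost (hm 1 0)) |>.const_mul _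
    refine hne (ae_restrict_of_forall_mem measurableSet_Icc fun t ht => ?_)
    refine (sFeasible_leaf_eq_of_ae_eq_zero h ?_ t ht).trans ha
    filter_upwards [(lintegral_eq_zero_iff' hHmeas).1 hzero, ae_restrict_mem measurableSet_Icc]
      with s hs hsI
    have hθ : 0 ≤ thetaA (ρ s) 0 1 := by
      simp only [thetaA]; linarith [(hP s hsI).1 0, (hP s hsI).1 1]
    simp only [H, Pi.zero_apply, mul_eq_zero, add_eq_zero, Lcost_eq_zero_iff hθ] at hs
    exact hs.resolve_left (by norm_num) |>.1
  exact (ENNReal.lt_add_right (ne_top_of_le_ne_top hfin.ne (le_self_add.trans hle)) hH).trans_le hle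

lemma exists_sFeasible_action_lt {wd : ℝ → ℝ} {ρ : ℝ → Fin 3 → ℝ} {m : ℝ → Fin 3 → Fin 3 → ℝ}
    (h : SFeasible pathE3 wd ![0, 0, 1] ![0, 1/2, 1/2] ρ m) (hfin : action pathE3 ρ m < ⊤)
    (hne : ¬ ∀ᵐ t ∂(volume.restrict (Icc (0 : ℝ) 1)), ρ t 0 = 0) :
    ∃ (ρ' : ℝ → Fin 3 → ℝ) (m' : ℝ → Fin 3 → Fin 3 → ℝ),
      SFeasible pathE3 wd ![0, 0, 1] ![0, 1/2, 1/2] ρ' m' ∧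
        action pathE3 ρ' m' < action pathE3 ρ m := by
  have hmerged := sFeasible_mergeLeaf h
  have ha : mergeLeaf ![0, 0, 1] = ![0, 0, 1] := by ext i; fin_cases i <;> simp [mergeLeaf]
  have hb : mergeLeaf ![0, 1/2, 1/2] = ![0, 1/2, 1/2] := by ext i; fin_cases i <;> simp [mergeLeaf]
  rw [ha, hb] at hmerged
  exact ⟨_, _, hmerged, action_mergeLeaf_lt h rfl hfin hne⟩

/-- Boundary behavior on the three-node path graph for the specially perturbed
problem with `ρ^a = (0,0,1)`, `ρ^b = (0,1/2,1/2)`: any feasible pair of finite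
action whose first component is not a.e. zero can be strictly improved, and hence
every minimizer stays on the boundary `ρ₁ ≡ 0`. -/
theorem boundary_behavior_three_node_path
    (w wd : ℝ → ℝ) (hw : IsPWL w wd)
    (hslope : ∀ t ∈ Set.Ico (0 : ℝ) 1, wd t ≠ -1) :
    (∀ (ρ : ℝ → Fin 3 → ℝ) (m : ℝ → Fin 3 → Fin 3 → ℝ),
      SFeasible pathE3 wd ![0, 0, 1] ![0, 1/2, 1/2] ρ m →
      action pathE3 ρ m < ⊤ →
      ¬ (∀ᵐ t ∂(volume.restrict (Set.Icc (0 : ℝ) 1)), ρ t 0 = 0) →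
      ∃ (ρ' : ℝ → Fin 3 → ℝ) (m' : ℝ → Fin 3 → Fin 3 → ℝ),
        SFeasible pathE3 wd ![0, 0, 1] ![0, 1/2, 1/2] ρ' m' ∧
        action pathE3 ρ' m' < action pathE3 ρ m) ∧
    (∀ (ρs : ℝ → Fin 3 → ℝ) (ms : ℝ → Fin 3 → Fin 3 → ℝ),
      SFeasible pathE3 wd ![0, 0, 1] ![0, 1/2, 1/2] ρs ms →
      (∀ (ρ : ℝ → Fin 3 → ℝ) (m : ℝ → Fin 3 → Fin 3 → ℝ),
        SFeasible pathE3 wd ![0, 0, 1] ![0, 1/2, 1/2] ρ m →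
        action pathE3 ρs ms ≤ action pathE3 ρ m) →
      ∀ t ∈ Set.Icc (0 : ℝ) 1, ρs t 0 = 0) := by
  refine ⟨fun ρ m h hfin hne => exists_sFeasible_action_lt h hfin hne, fun ρs ms hs hmin t ht => ?_⟩
  obtain ⟨ρ, m, h, hfin⟩ := exists_sFeasible_action_lt_top hw hslope
  by_contra hne
  have hne_ae : ¬ ∀ᵐ t ∂(volume.restrict (Icc (0 : ℝ) 1)), ρs t 0 = 0 := fun hae =>
    hne (Measure.eqOn_Icc_of_ae_eq volume zero_ne_one hae (continuousOn_pi.1 hs.1 0)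
      continuousOn_const ht)
  obtain ⟨ρ', m', h', hlt⟩ :=
    exists_sFeasible_action_lt hs ((hmin ρ m h).trans_lt hfin) hne_ae
  exact (hmin ρ' m' h').not_gt hlt

end
end
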